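/- Let t ≥ s be positive integers. A t × s complex matrix K satisfies J_t(0) K = -K J_s(0) if and only if K consists of an s × s upper-triangular block K̂ on top (with entries K̂_{ij} = (−1)^{i−1} k_{j−i+1} for i ≤ j and 0 otherwise, for arbitrary complex k_1, …, k_s) and the (t−s) × s zero matrix below. -/
import Mathlib


/-- The `t × t` Jordan block with eigenvalue `l`. -/
def JordanBlock (t : ℕ) (l : ℂ) : Matrix (Fin t) (Fin t) ℂ :=
  Matrix.of fun i j => if (j : ℕ) = i then l else if (j : ℕ) = (i : ℕ) + 1 then 1 else 0

lemma mulJ {t s : ℕ} (K : Matrix (Fin t) (Fin s) ℂ) (i : Fin t) (j : Fin s) :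
    (JordanBlock t 0 * K) i j = if h : (i : ℕ) + 1 < t then K ⟨(i : ℕ) + 1, h⟩ j else 0 := by
  rw [Matrix.mul_apply]
  split
  · next h =>
    rw [Finset.sum_eq_single (⟨(i : ℕ) + 1, h⟩ : Fin t)]
    · simp [JordanBlock]
    · intro b _ hb
      have hb' : (b : ℕ) ≠ (i : ℕ) + 1 := fun hh => hb (Fin.ext hh)
      simp only [JordanBlock, Matrix.of_apply]
      split_ifs <;> simp_all
    · simp
  · next h =>
    apply Finset.sum_eq_zero
    intro b _
    have hb' : (b : ℕ) ≠ (i : ℕ) + 1 := fun hh => h (hh ▸ b.isLt)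
    simp only [JordanBlock, Matrix.of_apply]
    split_ifs <;> simp_all

lemma Jmul {t s : ℕ} (K : Matrix (Fin t) (Fin s) ℂ) (i : Fin t) (j : Fin s) :
    (K * JordanBlock s 0) i j =
      if 0 < (j : ℕ) then
        K i ⟨(j : ℕ) - 1, Nat.lt_of_le_of_lt (Nat.sub_le _ _) j.isLt⟩ else 0 := by
  rw [Matrix.mul_apply]
  split
  · next h =>
    rw [Finset.sum_eq_single (⟨(j : ℕ) - 1, Nat.lt_of_le_of_lt (Nat.sub_le _ _) j.isLt⟩ : Fin s)]
    · have h1 : (j : ℕ) = (j : ℕ) - 1 + 1 := by omega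
      have h2 : (j : ℕ) ≠ (j : ℕ) - 1 := by omega
      simp [JordanBlock, h2, ← h1]
    · intro b _ hb
      have hbv : (b : ℕ) ≠ (j : ℕ) - 1 := fun hh => hb (Fin.ext hh)
      have hb' : (j : ℕ) ≠ (b : ℕ) + 1 := by omega
      simp only [JordanBlock, Matrix.of_apply]
      split_ifs <;> simp_all
    · simp
  · next h =>
    apply Finset.sum_eq_zero
    intro b _
    have hb' : (j : ℕ) ≠ (b : ℕ) + 1 := by omega
    simp only [JordanBlock, Matrix.of_apply]
    split_ifs <;> simp_all

/-- `K` consists of the `s × s` upper-triangular block `K̂` on top (entries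
`(−1)^{i−1} k_{j−i+1}`, 1-indexed, for `i ≤ j`, else `0`) and zeros below. -/
theorem stmt_4 (t s : ℕ) (hs : 0 < s) (hts : s ≤ t) (K : Matrix (Fin t) (Fin s) ℂ) :
    JordanBlock t 0 * K = -(K * JordanBlock s 0) ↔
      ∃ k : ℕ → ℂ, ∀ (i : Fin t) (j : Fin s),
        K i j = if (i : ℕ) ≤ (j : ℕ) then
            (-1 : ℂ) ^ (i : ℕ) * k ((j : ℕ) - (i : ℕ))
          else 0 := by
  constructor
  · intro heq
    have heq' : ∀ (i : Fin t) (j : Fin s),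
        (JordanBlock t 0 * K) i j = -((K * JordanBlock s 0) i j) := by
      intro i j
      rw [heq]; simp
    refine ⟨fun n => if h : n < s then K ⟨0, lt_of_lt_of_le hs hts⟩ ⟨n, h⟩ else 0, ?_⟩
    have key : ∀ n, ∀ (i : Fin t) (j : Fin s), (i : ℕ) = n →
        K i j = if (i : ℕ) ≤ (j : ℕ) then
            (-1 : ℂ) ^ (i : ℕ) *
              (if h : (j : ℕ) - (i : ℕ) < s then
                K ⟨0, lt_of_lt_of_le hs hts⟩ ⟨(j : ℕ) - (i : ℕ), h⟩ else 0)
          else 0 := by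
      intro n
      induction n with
      | zero =>
        intro i j hi
        have : i = ⟨0, lt_of_lt_of_le hs hts⟩ := Fin.ext hi
        subst this
        simp [j.isLt]
      | succ n ih =>
        intro i j hi
        have hn : n + 1 < t := hi ▸ i.isLt
        have hn' : n < t := by omega
        have h1 := heq' ⟨n, hn'⟩ j
        rw [mulJ, Jmul] at h1
        simp only [Fin.val_mk, dif_pos hn] at h1
        have hieq : i = ⟨n + 1, hn⟩ := Fin.ext hi
        rw [hieq] at *
        rw [h1]
        simp only [Fin.val_mk]
        by_cases hj : 0 < (j : ℕ)
        · rw [if_pos hj]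
          rw [ih ⟨n, hn'⟩ ⟨(j : ℕ) - 1, Nat.lt_of_le_of_lt (Nat.sub_le _ _) j.isLt⟩ rfl]
          simp only [Fin.val_mk]
          by_cases hle : n + 1 ≤ (j : ℕ)
          · rw [if_pos (by omega : n ≤ (j : ℕ) - 1), if_pos hle]
            have h2 : (j : ℕ) - 1 - n = (j : ℕ) - (n + 1) := by omega
            rw [h2, pow_succ]
            ring
          · rw [if_neg (by omega : ¬ n ≤ (j : ℕ) - 1), if_neg hle]
            simp
        · rw [if_neg hj, if_neg (by omega : ¬ n + 1 ≤ (j : ℕ))]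
          simp
    intro i j
    have hlt : (j : ℕ) - (i : ℕ) < s := by omega
    rw [key (i : ℕ) i j rfl]
    try simp only [dif_pos hlt]
  · rintro ⟨k, hk⟩
    ext i j
    rw [Matrix.neg_apply, mulJ, Jmul]
    simp only [hk, Fin.val_mk]
    split_ifs <;>
      first
        | (exfalso; omega)
        | simp
        | (rw [show (j : ℕ) - 1 - (i : ℕ) = (j : ℕ) - ((i : ℕ) + 1) by omega, pow_succ]; ring)
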